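/- Fix ℓ ∈ ℕ. Let Q ∈ Δ_m have full support (Q_i > 0 for all i), let Π be nonempty with Q ∉ Π, and assume the regularity condition on Π. Then lim_{n→∞} D_KL(Π_{n,ℓ} ∩ 𝒫_n ‖ Q) = D_KL(Π ‖ Q), where the infimum over the empty set is +∞. -/

import Mathlib

open Filter

noncomputable section

/-- The set of types of length-`n` sequences over an alphabet of size `m`:
probability vectors all of whose coordinates are integer multiples of `1/n`. -/
def typesP (m n : ℕ) : Set (Fin m → ℝ) :=
  {p | p ∈ stdSimplex ℝ (Fin m) ∧ ∀ i, ∃ k : ℕ, p i = (k : ℝ) / (n : ℝ)}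

/-- KL divergence `D_KL(P‖Q) = Σ_i P_i ln(P_i/Q_i)`. -/
def klDiv {m : ℕ} (P Q : Fin m → ℝ) : ℝ :=
  ∑ i, P i * Real.log (P i / Q i)

/-- KL divergence of a set of distributions from `Q` (as an extended real,
so that the infimum over the empty set is `+∞`). -/
def klDivSet {m : ℕ} (S : Set (Fin m → ℝ)) (Q : Fin m → ℝ) : EReal :=
  ⨅ P : S, ((klDiv P.1 Q : ℝ) : EReal)

/-- The set `Π` determined by the `K × m` matrix `A` over the alphabet of size
`m + 1`: probability vectors whose first `m` coordinates satisfy at least one of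
the `K` linear constraints `(A p)_i ≥ 0`. -/
def PiSet {K m : ℕ} (A : Matrix (Fin K) (Fin m) ℝ) : Set (Fin (m + 1) → ℝ) :=
  {p | p ∈ stdSimplex ℝ (Fin (m + 1)) ∧ ∃ i : Fin K, 0 ≤ ∑ j, A i j * p j.castSucc}

/-- The shifted set `Π_{n,ℓ}`: at least one constraint `(A p)_i ≥ ℓ/(n−ℓ)`. -/
def PiSetShift {K m : ℕ} (A : Matrix (Fin K) (Fin m) ℝ) (n ℓ : ℕ) :
    Set (Fin (m + 1) → ℝ) :=
  {p | p ∈ stdSimplex ℝ (Fin (m + 1)) ∧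
    ∃ i : Fin K, (ℓ : ℝ) / ((n : ℝ) - (ℓ : ℝ)) ≤ ∑ j, A i j * p j.castSucc}

/-- The regularity condition: every point of `Π` is a limit of points of the
simplex satisfying some constraint strictly. -/
def RegularPi {K m : ℕ} (A : Matrix (Fin K) (Fin m) ℝ) : Prop :=
  ∀ p ∈ PiSet A, p ∈ closure {q : Fin (m + 1) → ℝ |
    q ∈ stdSimplex ℝ (Fin (m + 1)) ∧ ∃ i : Fin K, 0 < ∑ j, A i j * q j.castSucc}

open Set Topology

/- The shifted constraints `(A p)_i ≥ ℓ/(n-ℓ)` only shrink `Π`, which gives the lower bound.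
For the upper bound, regularity and continuity of `D_KL(·‖Q)` (here `Q` has full support) let us
approach `D_KL(Π‖Q)` by points `q` of the simplex satisfying some constraint strictly; rounding `q`
down to multiples of `1/n` (the last coordinate taking up the slack) gives types converging to
`q`, and these eventually satisfy the same constraint above the vanishing threshold `ℓ/(n-ℓ)`. -/

lemma klDiv_eq_sum_mul_log_sub {m : ℕ} (P : Fin m → ℝ) {Q : Fin m → ℝ} (hQ : ∀ i, 0 < Q i) :
    klDiv P Q = ∑ i, (P i * Real.log (P i) - P i * Real.log (Q i)) := by
  refine Finset.sum_congr rfl fun i _ => ?_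
  rcases eq_or_ne (P i) 0 with hP | hP
  · simp [hP]
  · rw [Real.log_div hP (hQ i).ne', mul_sub]

lemma continuous_klDiv {m : ℕ} {Q : Fin m → ℝ} (hQ : ∀ i, 0 < Q i) :
    Continuous fun P : Fin m → ℝ => klDiv P Q := by
  simp_rw [klDiv_eq_sum_mul_log_sub _ hQ]
  fun_prop

lemma klDivSet_le {m : ℕ} {S : Set (Fin m → ℝ)} {P : Fin m → ℝ} (hP : P ∈ S) (Q : Fin m → ℝ) :
    klDivSet S Q ≤ klDiv P Q :=
  iInf_le (fun P : S => ((klDiv P.1 Q : ℝ) : EReal)) ⟨P, hP⟩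

lemma klDivSet_anti {m : ℕ} {S T : Set (Fin m → ℝ)} (hST : S ⊆ T) (Q : Fin m → ℝ) :
    klDivSet T Q ≤ klDivSet S Q :=
  le_iInf fun P => klDivSet_le (hST P.2) Q

lemma PiSetShift_subset_PiSet {K m : ℕ} (A : Matrix (Fin K) (Fin m) ℝ) {n ℓ : ℕ} (hn : ℓ ≤ n) :
    PiSetShift A n ℓ ⊆ PiSet A := fun _ ⟨hp, i, hi⟩ =>
  ⟨hp, i, (div_nonneg (Nat.cast_nonneg _) (sub_nonneg.2 (Nat.cast_le.2 hn))).trans hi⟩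

lemma tendsto_shift_threshold (ℓ : ℕ) :
    Tendsto (fun n : ℕ => (ℓ : ℝ) / ((n : ℝ) - (ℓ : ℝ))) atTop (𝓝 0) :=
  tendsto_const_nhds.div_atTop
    (tendsto_atTop_add_const_right _ _ tendsto_natCast_atTop_atTop)

lemma tendsto_floor_mul_div {a : ℝ} (ha : 0 ≤ a) :
    Tendsto (fun n : ℕ => (⌊a * n⌋₊ : ℝ) / n) atTop (𝓝 a) :=
  (tendsto_nat_floor_mul_div_atTop ha).comp tendsto_natCast_atTop_atTop

section RoundType

variable {m : ℕ} {q : Fin (m + 1) → ℝ}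

def roundType (q : Fin (m + 1) → ℝ) (n : ℕ) : Fin (m + 1) → ℝ :=
  Fin.lastCases (1 - ∑ j : Fin m, (⌊q j.castSucc * n⌋₊ : ℝ) / n)
    (fun j => (⌊q j.castSucc * n⌋₊ : ℝ) / n)

@[simp]
lemma roundType_castSucc (q : Fin (m + 1) → ℝ) (n : ℕ) (j : Fin m) :
    roundType q n j.castSucc = (⌊q j.castSucc * n⌋₊ : ℝ) / n :=
  Fin.lastCases_castSucc _

@[simp]
lemma roundType_last (q : Fin (m + 1) → ℝ) (n : ℕ) :
    roundType q n (Fin.last m) = 1 - ∑ j : Fin m, (⌊q j.castSucc * n⌋₊ : ℝ) / n :=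
  Fin.lastCases_last

lemma sum_floor_mul_castSucc_le (hq : q ∈ stdSimplex ℝ (Fin (m + 1))) (n : ℕ) :
    ∑ j : Fin m, ⌊q j.castSucc * n⌋₊ ≤ n := by
  have hsum : ∑ j : Fin m, q j.castSucc + q (Fin.last m) = 1 := by
    rw [← Fin.sum_univ_castSucc]; exact hq.2
  have hfloor : (∑ j : Fin m, ⌊q j.castSucc * n⌋₊ : ℕ) ≤ (n : ℝ) := by
    calc ((∑ j : Fin m, ⌊q j.castSucc * n⌋₊ : ℕ) : ℝ)
        ≤ ∑ j : Fin m, q j.castSucc * n := by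
          push_cast
          exact Finset.sum_le_sum fun j _ => Nat.floor_le (by have := hq.1 j.castSucc; positivity)
      _ = (∑ j : Fin m, q j.castSucc) * n := (Finset.sum_mul ..).symm
      _ ≤ 1 * n := by gcongr; linarith [hq.1 (Fin.last m)]
      _ = n := one_mul _
  exact_mod_cast hfloor

lemma roundType_mem_typesP (hq : q ∈ stdSimplex ℝ (Fin (m + 1))) {n : ℕ} (hn : n ≠ 0) :
    roundType q n ∈ typesP (m + 1) n := by
  set S := ∑ j : Fin m, ⌊q j.castSucc * n⌋₊
  have hS := sum_floor_mul_castSucc_le hq n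
  have hlast : roundType q n (Fin.last m) = ((n - S : ℕ) : ℝ) / n := by
    rw [roundType_last, ← Finset.sum_div, Nat.cast_sub hS, Nat.cast_sum, sub_div,
      div_self (Nat.cast_ne_zero.2 hn)]
  have hcoord : ∀ j, ∃ k : ℕ, roundType q n j = (k : ℝ) / n := by
    refine Fin.lastCases ⟨_, hlast⟩ fun j => ⟨_, roundType_castSucc q n j⟩
  refine ⟨⟨fun j => ?_, ?_⟩, hcoord⟩
  · obtain ⟨k, hk⟩ := hcoord j
    rw [hk]; positivity
  · rw [Fin.sum_univ_castSucc, roundType_last]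
    simp only [roundType_castSucc]
    ring

lemma tendsto_roundType (hq : q ∈ stdSimplex ℝ (Fin (m + 1))) :
    Tendsto (roundType q) atTop (𝓝 q) := by
  have hcoord (j : Fin m) :
      Tendsto (fun n : ℕ => (⌊q j.castSucc * n⌋₊ : ℝ) / n) atTop (𝓝 (q j.castSucc)) :=
    tendsto_floor_mul_div (hq.1 _)
  have hlast : q (Fin.last m) = 1 - ∑ j : Fin m, q j.castSucc := by
    rw [eq_sub_iff_add_eq, add_comm, ← Fin.sum_univ_castSucc]; exact hq.2
  refine tendsto_pi_nhds.2 (Fin.lastCases ?_ fun j => ?_)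
  · simpa only [roundType_last, hlast] using
      tendsto_const_nhds.sub (tendsto_finsetSum _ fun j _ => hcoord j)
  · simpa only [roundType_castSucc] using hcoord j

lemma eventually_roundType_mem_PiSetShift {K : ℕ} (A : Matrix (Fin K) (Fin m) ℝ) (ℓ : ℕ)
    (hq : q ∈ stdSimplex ℝ (Fin (m + 1))) {i : Fin K} (hi : 0 < ∑ j, A i j * q j.castSucc) :
    ∀ᶠ n in atTop, roundType q n ∈ PiSetShift A n ℓ ∩ typesP (m + 1) n := by
  have hconstr : Tendsto (fun n => ∑ j, A i j * roundType q n j.castSucc) atTop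
      (𝓝 (∑ j, A i j * q j.castSucc)) :=
    tendsto_finsetSum _ fun j _ =>
      tendsto_const_nhds.mul (tendsto_pi_nhds.1 (tendsto_roundType hq) j.castSucc)
  filter_upwards [hconstr.eventually (eventually_gt_nhds (half_lt_self hi)),
    (tendsto_shift_threshold ℓ).eventually (eventually_lt_nhds (half_pos hi)),
    eventually_ne_atTop 0] with n hlarge hsmall hn
  have htype := roundType_mem_typesP hq hn
  exact ⟨⟨htype.1, i, hsmall.le.trans hlarge.le⟩, htype⟩

end RoundType

theorem kl_projection_of_shifted_types_tendsto_general
    {K m : ℕ} (A : Matrix (Fin K) (Fin m) ℝ) (ℓ : ℕ)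
    (Q : Fin (m + 1) → ℝ)
    (hQpos : ∀ i, 0 < Q i)
    (hreg : RegularPi A) :
    Tendsto (fun n : ℕ => klDivSet (PiSetShift A n ℓ ∩ typesP (m + 1) n) Q) atTop
      (nhds (klDivSet (PiSet A) Q)) := by
  refine tendsto_order.2 ⟨fun a ha => ?_, fun b hb => ?_⟩
  · filter_upwards [eventually_ge_atTop ℓ] with n hn
    exact ha.trans_le (klDivSet_anti (inter_subset_left.trans (PiSetShift_subset_PiSet A hn)) Q)
  · obtain ⟨r, hr, hrb⟩ := EReal.exists_between_coe_real hb
    obtain ⟨⟨P, hP⟩, hPr⟩ := iInf_lt_iff.1 hr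
    obtain ⟨q, hqr, hq, i, hi⟩ := mem_closure_iff.1 (hreg P hP) {p | klDiv p Q < r}
      (isOpen_lt (continuous_klDiv hQpos) continuous_const) (EReal.coe_lt_coe_iff.1 hPr)
    have hkl : ∀ᶠ n in atTop, klDiv (roundType q n) Q < r :=
      ((continuous_klDiv hQpos).tendsto q |>.comp (tendsto_roundType hq)).eventually
        (eventually_lt_nhds hqr)
    filter_upwards [eventually_roundType_mem_PiSetShift A ℓ hq hi, hkl] with n hmem hlt
    exact ((klDivSet_le hmem Q).trans_lt (EReal.coe_lt_coe_iff.2 hlt)).trans hrb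

/-- for full-support `Q ∉ Π` with `Π` nonempty and regular, and any
fixed `ℓ ∈ ℕ`, `lim_{n→∞} D_KL(Π_{n,ℓ} ∩ 𝒫_n ‖ Q) = D_KL(Π ‖ Q)`. -/
theorem kl_projection_of_shifted_types_tendsto
    {K m : ℕ} (A : Matrix (Fin K) (Fin m) ℝ) (ℓ : ℕ)
    (Q : Fin (m + 1) → ℝ) (hQ : Q ∈ stdSimplex ℝ (Fin (m + 1)))
    (hQpos : ∀ i, 0 < Q i)
    (hne : (PiSet A).Nonempty) (hQnot : Q ∉ PiSet A)
    (hreg : RegularPi A) :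
    Tendsto (fun n : ℕ => klDivSet (PiSetShift A n ℓ ∩ typesP (m + 1) n) Q) atTop
      (nhds (klDivSet (PiSet A) Q)) :=
  kl_projection_of_shifted_types_tendsto_general A ℓ Q hQpos hreg

end
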